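/- Slater's identity (13): ∑_{n=0}^∞ (-q;q)_n q^(n(n-1)/2) / (q;q)_n = (-q;q)_∞ · ((-q²;q²)_∞ + (-q;q²)_∞). -/

import Mathlib

noncomputable def qPoch (a q : ℂ) (n : ℕ) : ℂ := ∏ i ∈ Finset.range n, (1 - a * q ^ i)

noncomputable def qPochInf (a q : ℂ) : ℂ := ∏' i : ℕ, (1 - a * q ^ i)

/-!
The finite q-binomial theorem, `(-z;q)_n / (q;q)_n = ∑_{k+m=n} e_k(z) / (q;q)_m` with
`e_k(z) = q^{k(k-1)/2} z^k / (q;q)_k`, turns the left-hand side into the absolutely convergent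
double series `∑_{k,m} q^{k(k-1)/2 + km} e_k(q) e_m(1)`. Letting `n → ∞` in the same identity gives
Euler's `∑_k e_k(z) = (-z;q)_∞`. Summing over `m` first with Euler's identity, and using
`(-q^k;q)_∞ (-q;q)_k = (1 + q^k) (-q;q)_∞` and `(q;q)_k (-q;q)_k = (q²;q²)_k`, the `k`-th row is
`(-q;q)_∞ (q^{k²} + q^{k²+k}) / (q²;q²)_k`; Euler's identity in base `q²` sums the rows.
-/

open Finset Filter Topology

theorem Nat.triangle_add (a b : ℕ) :
    (a + b) * (a + b - 1) / 2 = a * (a - 1) / 2 + b * (b - 1) / 2 + a * b := by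
  induction b with
  | zero => simp
  | succ b ih => rw [← add_assoc, Nat.triangle_succ, ih, Nat.triangle_succ]; ring

theorem summable_norm_pow_triangle_mul_pow {𝕜 : Type*} [NormedField 𝕜] {q : 𝕜} (hq : ‖q‖ < 1)
    (z : 𝕜) : Summable fun k ↦ ‖q ^ (k * (k - 1) / 2) * z ^ k‖ := by
  refine summable_of_ratio_norm_eventually_le (r := 1 / 2) (by norm_num) ?_
  have hsmall : ∀ᶠ k : ℕ in atTop, ‖q‖ ^ k * ‖z‖ ≤ 1 / 2 := by
    have := (tendsto_pow_atTop_nhds_zero_of_lt_one (norm_nonneg q) hq).mul_const ‖z‖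
    rw [zero_mul] at this
    exact this.eventually (eventually_le_nhds (by norm_num))
  filter_upwards [hsmall] with k hk
  simp only [norm_norm, norm_mul, norm_pow, Nat.triangle_succ, pow_add, pow_succ]
  calc ‖q‖ ^ (k * (k - 1) / 2) * ‖q‖ ^ k * (‖z‖ ^ k * ‖z‖)
      = (‖q‖ ^ k * ‖z‖) * (‖q‖ ^ (k * (k - 1) / 2) * ‖z‖ ^ k) := by ring
    _ ≤ 1 / 2 * (‖q‖ ^ (k * (k - 1) / 2) * ‖z‖ ^ k) := by gcongr

theorem tendsto_sum_antidiagonal_mul {R : Type*} [NormedRing R] [CompleteSpace R] {a b : ℕ → R}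
    {l : R} (ha : Summable fun k ↦ ‖a k‖) (hb : Tendsto b atTop (𝓝 l)) :
    Tendsto (fun n ↦ ∑ p ∈ antidiagonal n, a p.1 * b p.2) atTop (𝓝 ((∑' k, a k) * l)) := by
  obtain ⟨C, hC⟩ := hb.norm.bddAbove_range
  have hC' : ∀ m, ‖b m‖ ≤ C := fun m ↦ hC ⟨m, rfl⟩
  let f : ℕ → ℕ → R := fun n k ↦ if k ≤ n then a k * b (n - k) else 0
  have hlim : ∀ k, Tendsto (f · k) atTop (𝓝 (a k * l)) := fun k ↦
    ((hb.comp (tendsto_sub_atTop_nat k)).const_mul (a k)).congr'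
      (by filter_upwards [eventually_ge_atTop k] with n hn using (if_pos hn).symm)
  have hbound : ∀ n k, ‖f n k‖ ≤ ‖a k‖ * C := fun n k ↦ by
    by_cases hk : k ≤ n
    · simpa [f, hk] using (norm_mul_le _ _).trans (by gcongr; exact hC' _)
    · simpa [f, hk] using mul_nonneg (norm_nonneg _) ((norm_nonneg _).trans (hC' 0))
  have hsum : ∀ n, ∑' k, f n k = ∑ p ∈ antidiagonal n, a p.1 * b p.2 := fun n ↦ by
    rw [tsum_eq_sum (s := range (n + 1)) fun k hk ↦ if_neg (by simpa using hk),
      Nat.sum_antidiagonal_eq_sum_range_succ (fun i j ↦ a i * b j)]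
    exact sum_congr rfl fun k hk ↦ if_pos (by simpa [Nat.lt_succ_iff] using hk)
  rw [← (ha.of_norm).tsum_mul_right]
  simpa only [hsum] using tendsto_tsum_of_dominated_convergence (ha.mul_right C) hlim
    (Eventually.of_forall hbound)

theorem HasSum.sum_antidiagonal {α : Type*} [AddCommMonoid α] [TopologicalSpace α]
    [ContinuousAdd α] [RegularSpace α] {f : ℕ × ℕ → α} {a : α} (h : HasSum f a) :
    HasSum (fun n ↦ ∑ p ∈ antidiagonal n, f p) a :=
  (HasAntidiagonal.sigmaAntidiagonalEquivProd.hasSum_iff.2 h).sigma fun n ↦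
    (antidiagonal n).hasSum f

section QPochhammer

variable {a q : ℂ}

theorem qPoch_zero (a q : ℂ) : qPoch a q 0 = 1 := prod_range_zero _

theorem qPoch_succ (a q : ℂ) (n : ℕ) : qPoch a q (n + 1) = qPoch a q n * (1 - a * q ^ n) :=
  prod_range_succ _ _

theorem one_sub_mul_pow_ne_zero (ha : ‖a‖ < 1) (hq : ‖q‖ ≤ 1) (i : ℕ) : 1 - a * q ^ i ≠ 0 := by
  refine sub_ne_zero.2 fun h ↦ ?_
  have : ‖a * q ^ i‖ < 1 := by
    rw [norm_mul, norm_pow]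
    exact (mul_le_of_le_one_right (norm_nonneg a) (pow_le_one₀ (norm_nonneg q) hq)).trans_lt ha
  simp [← h] at this

theorem qPoch_ne_zero (ha : ‖a‖ < 1) (hq : ‖q‖ ≤ 1) (n : ℕ) : qPoch a q n ≠ 0 :=
  prod_ne_zero_iff.2 fun i _ ↦ one_sub_mul_pow_ne_zero ha hq i

theorem qPoch_sq (q : ℂ) (n : ℕ) : qPoch (q ^ 2) (q ^ 2) n = qPoch q q n * qPoch (-q) q n := by
  simp only [qPoch, ← prod_mul_distrib]
  exact prod_congr rfl fun i _ ↦ by ring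

theorem summable_norm_mul_pow (a : ℂ) (hq : ‖q‖ < 1) : Summable fun i : ℕ ↦ ‖-(a * q ^ i)‖ := by
  simpa only [norm_neg, norm_mul, norm_pow] using
    (summable_geometric_of_lt_one (norm_nonneg q) hq).mul_left ‖a‖

theorem multipliable_one_sub_mul_pow (a : ℂ) (hq : ‖q‖ < 1) :
    Multipliable fun i : ℕ ↦ 1 - a * q ^ i := by
  simpa only [sub_eq_add_neg] using multipliable_one_add_of_summable (summable_norm_mul_pow a hq)

theorem tendsto_qPoch (a : ℂ) (hq : ‖q‖ < 1) : Tendsto (qPoch a q) atTop (𝓝 (qPochInf a q)) :=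
  (multipliable_one_sub_mul_pow a hq).hasProd.tendsto_prod_nat

theorem qPochInf_ne_zero (hq : ‖q‖ < 1) (ha : ∀ i, 1 - a * q ^ i ≠ 0) : qPochInf a q ≠ 0 := by
  simp only [qPochInf, sub_eq_add_neg] at ha ⊢
  exact tprod_one_add_ne_zero_of_summable ha (summable_norm_mul_pow a hq)

theorem qPoch_mul_qPochInf (a : ℂ) (hq : ‖q‖ < 1) (n : ℕ) :
    qPoch a q n * qPochInf (a * q ^ n) q = qPochInf a q := by
  have hshift : (fun i ↦ 1 - a * q ^ (i + n)) = fun i ↦ 1 - a * q ^ n * q ^ i := by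
    ext i; ring
  have hmul := multipliable_one_sub_mul_pow (a * q ^ n) hq
  rw [← hshift] at hmul
  have := Multipliable.prod_mul_tprod_nat_mul' (f := fun i ↦ 1 - a * q ^ i) hmul
  rwa [hshift] at this

theorem exists_norm_inv_qPoch_le (hq : ‖q‖ < 1) : ∃ C, ∀ n, ‖(qPoch q q n)⁻¹‖ ≤ C := by
  have hlim := (tendsto_qPoch q hq).inv₀ (qPochInf_ne_zero hq (one_sub_mul_pow_ne_zero hq hq.le))
  obtain ⟨C, hC⟩ := hlim.norm.bddAbove_range
  exact ⟨C, fun n ↦ hC ⟨n, rfl⟩⟩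

end QPochhammer

theorem sum_antidiagonal_succ_of_recurrence {R : Type*} [CommRing R] {q z : R} {e b : ℕ → R}
    (he : ∀ k, (1 - q ^ (k + 1)) * e (k + 1) = z * q ^ k * e k)
    (hb : ∀ m, (1 - q ^ (m + 1)) * b (m + 1) = b m) (n : ℕ) :
    (1 - q ^ (n + 1)) * ∑ p ∈ antidiagonal (n + 1), e p.1 * b p.2
      = (1 + z * q ^ n) * ∑ p ∈ antidiagonal n, e p.1 * b p.2 := by
  -- `1 - q ^ (k + m) = (1 - q ^ m) + q ^ m * (1 - q ^ k)`; then shift `m` in the first part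
  -- and `k` in the second
  have hsplit : ∀ p ∈ antidiagonal (n + 1), (1 - q ^ (n + 1)) * (e p.1 * b p.2)
      = e p.1 * ((1 - q ^ p.2) * b p.2) + q ^ p.2 * ((1 - q ^ p.1) * e p.1) * b p.2 := by
    intro p hp
    rw [← mem_antidiagonal.1 hp, pow_add]
    ring
  have hshift : ∀ p ∈ antidiagonal n, q ^ p.2 * ((1 - q ^ (p.1 + 1)) * e (p.1 + 1)) * b p.2
      = z * q ^ n * (e p.1 * b p.2) := by
    intro p hp
    rw [he, ← mem_antidiagonal.1 hp, pow_add]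
    ring
  rw [mul_sum, sum_congr rfl hsplit, sum_add_distrib, Nat.sum_antidiagonal_succ',
    Nat.sum_antidiagonal_succ, sum_congr rfl hshift, ← mul_sum]
  simp only [hb, pow_zero, sub_self, zero_mul, mul_zero, zero_add]
  ring

noncomputable def eulerTerm (q z : ℂ) (k : ℕ) : ℂ := q ^ (k * (k - 1) / 2) * z ^ k / qPoch q q k

section Euler

variable {q : ℂ}

theorem eulerTerm_zero (q z : ℂ) : eulerTerm q z 0 = 1 := by simp [eulerTerm, qPoch_zero]

theorem one_sub_pow_mul_eulerTerm_succ (hq : ∀ n, qPoch q q n ≠ 0) (z : ℂ) (k : ℕ) :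
    (1 - q ^ (k + 1)) * eulerTerm q z (k + 1) = z * q ^ k * eulerTerm q z k := by
  have hk := hq (k + 1)
  rw [qPoch_succ, ← pow_succ'] at hk
  obtain ⟨hPk, hk1⟩ := mul_ne_zero_iff.1 hk
  rw [eulerTerm, eulerTerm, qPoch_succ, ← pow_succ', Nat.triangle_succ,
    pow_add q (k * (k - 1) / 2) k, pow_succ z]
  field_simp

theorem one_sub_pow_mul_inv_qPoch_succ (hq : ∀ n, qPoch q q n ≠ 0) (m : ℕ) :
    (1 - q ^ (m + 1)) * (qPoch q q (m + 1))⁻¹ = (qPoch q q m)⁻¹ := by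
  have hm := hq (m + 1)
  rw [qPoch_succ, ← pow_succ'] at hm ⊢
  obtain ⟨hPm, hm1⟩ := mul_ne_zero_iff.1 hm
  field_simp

theorem qPoch_neg_div_qPoch_eq_sum (hq : ∀ n, qPoch q q n ≠ 0) (z : ℂ) (n : ℕ) :
    qPoch (-z) q n / qPoch q q n = ∑ p ∈ antidiagonal n, eulerTerm q z p.1 * (qPoch q q p.2)⁻¹ := by
  induction n with
  | zero => simp [qPoch_zero, eulerTerm_zero]
  | succ n ih =>
    have hrec := sum_antidiagonal_succ_of_recurrence (one_sub_pow_mul_eulerTerm_succ hq z)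
      (b := fun m ↦ (qPoch q q m)⁻¹) (one_sub_pow_mul_inv_qPoch_succ hq) n
    have hn := hq (n + 1)
    rw [qPoch_succ, ← pow_succ'] at hn
    obtain ⟨hPn, hn1⟩ := mul_ne_zero_iff.1 hn
    rw [← ih] at hrec
    rw [eq_comm, ← mul_right_inj' hn1, hrec, qPoch_succ, qPoch_succ, ← pow_succ']
    field_simp
    ring

theorem summable_norm_eulerTerm (hq : ‖q‖ < 1) (z : ℂ) : Summable fun k ↦ ‖eulerTerm q z k‖ := by
  obtain ⟨C, hC⟩ := exists_norm_inv_qPoch_le hq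
  refine ((summable_norm_pow_triangle_mul_pow hq z).mul_right C).of_nonneg_of_le
    (fun _ ↦ norm_nonneg _) fun k ↦ ?_
  rw [eulerTerm, div_eq_mul_inv, norm_mul]
  gcongr
  exact hC k

theorem hasSum_eulerTerm (hq : ‖q‖ < 1) (z : ℂ) : HasSum (eulerTerm q z) (qPochInf (-z) q) := by
  have hP : ∀ n, qPoch q q n ≠ 0 := qPoch_ne_zero hq hq.le
  have hPinf : qPochInf q q ≠ 0 := qPochInf_ne_zero hq (one_sub_mul_pow_ne_zero hq hq.le)
  have hsum := summable_norm_eulerTerm hq z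
  -- the Cauchy partial sums tend both to `(∑ eulerTerm) / (q;q)_∞` and to `(-z;q)_∞ / (q;q)_∞`
  have hcauchy := tendsto_sum_antidiagonal_mul hsum ((tendsto_qPoch q hq).inv₀ hPinf)
  simp only [← qPoch_neg_div_qPoch_eq_sum hP] at hcauchy
  have hlim := tendsto_nhds_unique hcauchy ((tendsto_qPoch (-z) hq).div (tendsto_qPoch q hq) hPinf)
  rw [← div_eq_mul_inv, div_left_inj' hPinf] at hlim
  exact hlim ▸ hsum.of_norm.hasSum

end Euler

noncomputable def slaterSummand (q : ℂ) (p : ℕ × ℕ) : ℂ :=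
  q ^ (p.1 * (p.1 - 1) / 2) * q ^ (p.1 * p.2) * eulerTerm q q p.1 * eulerTerm q 1 p.2

section Slater

variable {q : ℂ}

theorem sum_antidiagonal_slaterSummand (hq : ‖q‖ < 1) (n : ℕ) :
    ∑ p ∈ antidiagonal n, slaterSummand q p
      = qPoch (-q) q n * q ^ (n * (n - 1) / 2) / qPoch q q n := by
  rw [mul_div_right_comm, qPoch_neg_div_qPoch_eq_sum (qPoch_ne_zero hq hq.le), sum_mul]
  refine sum_congr rfl fun p hp ↦ ?_
  rw [← mem_antidiagonal.1 hp, Nat.triangle_add, pow_add, pow_add]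
  simp only [slaterSummand, eulerTerm, one_pow]
  ring

theorem summable_slaterSummand (hq : ‖q‖ < 1) : Summable (slaterSummand q) := by
  refine Summable.of_norm_bounded ((summable_norm_eulerTerm hq q).mul_of_nonneg
    (summable_norm_eulerTerm hq 1) (fun _ ↦ norm_nonneg _) fun _ ↦ norm_nonneg _) fun p ↦ ?_
  have hpow : ∀ j : ℕ, ‖q ^ j‖ ≤ 1 := fun j ↦ by
    rw [norm_pow]; exact pow_le_one₀ (norm_nonneg q) hq.le
  rw [slaterSummand, norm_mul, norm_mul, norm_mul]
  calc ‖q ^ (p.1 * (p.1 - 1) / 2)‖ * ‖q ^ (p.1 * p.2)‖ * ‖eulerTerm q q p.1‖ * ‖eulerTerm q 1 p.2‖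
      ≤ 1 * 1 * ‖eulerTerm q q p.1‖ * ‖eulerTerm q 1 p.2‖ := by gcongr <;> exact hpow _
    _ = ‖eulerTerm q q p.1‖ * ‖eulerTerm q 1 p.2‖ := by ring

theorem pow_triangle_mul_eulerTerm_mul_qPochInf (hq : ‖q‖ < 1) (k : ℕ) :
    q ^ (k * (k - 1) / 2) * eulerTerm q q k * qPochInf (-q ^ k) q
      = qPochInf (-q) q * (eulerTerm (q ^ 2) q k + eulerTerm (q ^ 2) (q ^ 2) k) := by
  have hP := qPoch_ne_zero hq hq.le k
  have hPneg := qPoch_ne_zero (a := -q) (by simpa using hq) hq.le k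
  have hhead := qPoch_mul_qPochInf (-q ^ k) hq 1
  have htail := qPoch_mul_qPochInf (-q) hq k
  rw [show -q ^ k * q ^ 1 = -q * q ^ k by ring] at hhead
  rw [← hhead, ← htail, qPoch_succ, qPoch_zero]
  simp only [eulerTerm, qPoch_sq]
  field_simp
  ring

theorem hasSum_slaterSummand_fiber (hq : ‖q‖ < 1) (k : ℕ) :
    HasSum (fun m ↦ slaterSummand q (k, m))
      (qPochInf (-q) q * (eulerTerm (q ^ 2) q k + eulerTerm (q ^ 2) (q ^ 2) k)) := by
  rw [← pow_triangle_mul_eulerTerm_mul_qPochInf hq]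
  refine ((hasSum_eulerTerm hq (q ^ k)).mul_left _).congr_fun fun m ↦ ?_
  simp only [slaterSummand, eulerTerm, one_pow, ← pow_mul]
  ring

end Slater

theorem stmt9 (q : ℂ) (hq : ‖q‖ < 1) :
    ∑' n : ℕ, qPoch (-q) q n * q ^ (n * (n - 1) / 2) / qPoch q q n
      = qPochInf (-q) q * (qPochInf (-q ^ 2) (q ^ 2) + qPochInf (-q) (q ^ 2)) := by
  have hq2 : ‖q ^ 2‖ < 1 := by rw [norm_pow]; exact pow_lt_one₀ (norm_nonneg q) hq two_ne_zero
  have hF := (summable_slaterSummand hq).hasSum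
  have hdiag := hF.sum_antidiagonal
  simp only [sum_antidiagonal_slaterSummand hq] at hdiag
  have hfiber := hF.prod_fiberwise (hasSum_slaterSummand_fiber hq)
  have heuler :=
    ((hasSum_eulerTerm hq2 q).add (hasSum_eulerTerm hq2 (q ^ 2))).mul_left (qPochInf (-q) q)
  rw [hdiag.tsum_eq, hfiber.unique heuler, add_comm]
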